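/- Under the conditions of the previous statement and additionally ‖∇ℓ(w)‖ ≥ 2Lρ, the averaged-gradient descent step decreases the loss: ℓ(w − η g) ≤ ℓ(w) − η‖∇ℓ(w)‖²/4 for any step size 0 < η ≤ 1/(2L). -/

import Mathlib

/-!
Each averaged gradient is within `Lρ` of `∇ℓ(w)` by the Lipschitz bound, hence so is their mean
`g` (closed balls are convex); so `‖g - ∇ℓ(w)‖ ≤ ‖∇ℓ(w)‖ / 2`. The descent lemma
`ℓ(w + v) ≤ ℓ(w) + ⟪∇ℓ(w), v⟫ + L‖v‖²/2` with `v = -ηg` then reduces the claim to the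
elementary inequality `‖G‖²/4 ≤ ⟪G, g⟫ - (Lη/2)‖g‖²` whenever `2‖g - G‖ ≤ ‖G‖` and `Lη ≤ 1`.
-/

open scoped RealInnerProductSpace NNReal

section
variable {E : Type*} [NormedAddCommGroup E] [InnerProductSpace ℝ E] [CompleteSpace E]
  {f : E → ℝ} {K : ℝ≥0}

theorem hasDerivAt_comp_add_smul (hf : Differentiable ℝ f) (x v : E) (t : ℝ) :
    HasDerivAt (fun s : ℝ => f (x + s • v)) ⟪gradient f (x + t • v), v⟫ t := by
  have hline : HasDerivAt (fun s : ℝ => x + s • v) v t := by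
    simpa using ((hasDerivAt_id t).smul_const v).const_add x
  simpa [InnerProductSpace.toDual_apply_apply, Function.comp_def] using
    (hf _).hasGradientAt.hasFDerivAt.comp_hasDerivAt t hline

theorem inner_gradient_sub_le (hK : LipschitzWith K (gradient f)) (x y v : E) :
    ⟪gradient f y - gradient f x, v⟫ ≤ K * ‖y - x‖ * ‖v‖ :=
  (real_inner_le_norm _ _).trans <| mul_le_mul_of_nonneg_right
    (hK.norm_sub_le y x) (norm_nonneg v)

theorem image_add_le_of_lipschitzWith_gradient (hf : Differentiable ℝ f)
    (hK : LipschitzWith K (gradient f)) (x v : E) :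
    f (x + v) ≤ f x + ⟪gradient f x, v⟫ + K / 2 * ‖v‖ ^ 2 := by
  set ψ : ℝ → ℝ := fun t => t * ⟪gradient f x, v⟫ + K / 2 * t ^ 2 * ‖v‖ ^ 2 - f (x + t • v)
  have hψ : ∀ t, HasDerivAt ψ
      (⟪gradient f x, v⟫ + K * t * ‖v‖ ^ 2 - ⟪gradient f (x + t • v), v⟫) t := by
    intro t
    have hquad := ((hasDerivAt_pow 2 t).const_mul ((K : ℝ) / 2)).mul_const (‖v‖ ^ 2)
    exact ((((hasDerivAt_id t).mul_const _).add hquad).sub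
      (hasDerivAt_comp_add_smul hf x v t)).congr_deriv (by push_cast; ring)
  have hmono : MonotoneOn ψ (Set.Icc 0 1) := by
    refine monotoneOn_of_deriv_nonneg (convex_Icc 0 1)
      (fun t _ => (hψ t).continuousAt.continuousWithinAt)
      (fun t _ => (hψ t).differentiableAt.differentiableWithinAt) fun t ht => ?_
    rw [interior_Icc] at ht
    have hdist : ‖x + t • v - x‖ = t * ‖v‖ := by
      rw [add_sub_cancel_left, norm_smul, Real.norm_of_nonneg ht.1.le]
    have := inner_gradient_sub_le hK x (x + t • v) v
    rw [hdist, inner_sub_left] at this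
    rw [(hψ t).deriv]
    nlinarith
  have := hmono (by simp) (by simp) zero_le_one
  simp only [ψ, one_smul, zero_smul, add_zero, one_mul, one_pow, zero_mul, mul_zero,
    ne_eq, OfNat.ofNat_ne_zero, not_false_eq_true, zero_pow, zero_sub] at this
  linarith

omit [CompleteSpace E] in
theorem norm_sq_div_four_le_inner_sub (G g : E) {t : ℝ} (ht : t ≤ 1)
    (hg : 2 * ‖g - G‖ ≤ ‖G‖) :
    ‖G‖ ^ 2 / 4 ≤ ⟪G, g⟫ - t / 2 * ‖g‖ ^ 2 := by
  obtain ⟨e, rfl⟩ : ∃ e, g = G + e := ⟨g - G, by abel⟩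
  rw [add_sub_cancel_left] at hg
  rw [inner_add_right, real_inner_self_eq_norm_sq, norm_add_sq_real]
  have hCS : -(‖G‖ * ‖e‖) ≤ ⟪G, e⟫ := neg_le_of_abs_le (abs_real_inner_le_norm G e)
  nlinarith [mul_nonneg (sub_nonneg.2 ht) (neg_le_iff_add_nonneg.1 hCS),
    mul_nonneg (sub_nonneg.2 ht) (norm_nonneg G), norm_nonneg e, norm_nonneg G]

theorem image_sub_smul_le_of_lipschitzWith_gradient (hf : Differentiable ℝ f)
    (hK : LipschitzWith K (gradient f)) (x g : E) {η : ℝ} (hη₀ : 0 ≤ η) (hη₁ : K * η ≤ 1)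
    (hg : 2 * ‖g - gradient f x‖ ≤ ‖gradient f x‖) :
    f (x - η • g) ≤ f x - η * ‖gradient f x‖ ^ 2 / 4 := by
  have hstep := image_add_le_of_lipschitzWith_gradient hf hK x (-(η • g))
  rw [← sub_eq_add_neg, inner_neg_right, real_inner_smul_right, norm_neg, norm_smul,
    Real.norm_of_nonneg hη₀] at hstep
  have hgain := mul_le_mul_of_nonneg_left
    (norm_sq_div_four_le_inner_sub (gradient f x) g hη₁ hg) hη₀
  nlinarith
end

theorem norm_smul_sum_sub_le_of_lipschitzWith {E F ι : Type*} [SeminormedAddCommGroup E]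
    [SeminormedAddCommGroup F] [NormedSpace ℝ F] {φ : E → F} {K : ℝ≥0}
    (hφ : LipschitzWith K φ) {s : Finset ι} (hs : s.Nonempty) {ws : ι → E} {w : E} {ρ : ℝ}
    (hws : ∀ i ∈ s, ‖ws i - w‖ ≤ ρ) :
    ‖(s.card : ℝ)⁻¹ • ∑ i ∈ s, φ (ws i) - φ w‖ ≤ K * ρ := by
  rw [← dist_eq_norm, ← Metric.mem_closedBall, Finset.smul_sum]
  refine (convex_closedBall _ _).sum_mem (fun _ _ => by positivity) ?_ fun i hi => ?_
  · simp [hs.card_pos.ne']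
  · rw [Metric.mem_closedBall, dist_eq_norm]
    exact hφ.norm_sub_le_of_le (hws i hi)

theorem stmt_7_general {k : ℕ} (ℓ : EuclideanSpace ℝ (Fin k) → ℝ) (hdiff : Differentiable ℝ ℓ)
    (Lc : ℝ) (hLc : 0 < Lc) (hlip : LipschitzWith Lc.toNNReal (gradient ℓ))
    (N : ℕ) (hN : 0 < N) (w : EuclideanSpace ℝ (Fin k))
    (ws : Fin N → EuclideanSpace ℝ (Fin k)) (ρ : ℝ)
    (hws : ∀ n, ‖ws n - w‖ ≤ ρ)
    (g : EuclideanSpace ℝ (Fin k))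
    (hg : g = (N : ℝ)⁻¹ • ∑ n, gradient ℓ (ws n))
    (hbig : 2 * Lc * ρ ≤ ‖gradient ℓ w‖)
    (η : ℝ) (hη0 : 0 < η) (hη1 : η ≤ 1 / (2 * Lc)) :
    ℓ (w - η • g) ≤ ℓ w - η * ‖gradient ℓ w‖ ^ 2 / 4 := by
  have hL : (Lc.toNNReal : ℝ) = Lc := Real.coe_toNNReal Lc hLc.le
  have herr : ‖g - gradient ℓ w‖ ≤ Lc * ρ := by
    have := norm_smul_sum_sub_le_of_lipschitzWith hlip
      (Finset.univ_nonempty_iff.2 (Fin.pos_iff_nonempty.1 hN)) fun n _ => hws n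
    rwa [Finset.card_univ, Fintype.card_fin, ← hg, hL] at this
  have hη : Lc.toNNReal * η ≤ 1 := by
    rw [hL]
    rw [le_div_iff₀ (by positivity)] at hη1
    linarith
  exact image_sub_smul_le_of_lipschitzWith_gradient hdiff hlip w g hη0.le hη (by linarith)

theorem stmt_7 {k : ℕ} (ℓ : EuclideanSpace ℝ (Fin k) → ℝ) (hdiff : Differentiable ℝ ℓ)
    (Lc : ℝ) (hLc : 0 < Lc) (hlip : LipschitzWith Lc.toNNReal (gradient ℓ))
    (N : ℕ) (hN : 0 < N) (w : EuclideanSpace ℝ (Fin k))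
    (ws : Fin N → EuclideanSpace ℝ (Fin k)) (ρ : ℝ) (hρ : 0 ≤ ρ)
    (hws : ∀ n, ‖ws n - w‖ ≤ ρ)
    (g : EuclideanSpace ℝ (Fin k))
    (hg : g = (N : ℝ)⁻¹ • ∑ n, gradient ℓ (ws n))
    (hbig : 2 * Lc * ρ ≤ ‖gradient ℓ w‖)
    (η : ℝ) (hη0 : 0 < η) (hη1 : η ≤ 1 / (2 * Lc)) :
    ℓ (w - η • g) ≤ ℓ w - η * ‖gradient ℓ w‖ ^ 2 / 4 :=
  stmt_7_general ℓ hdiff Lc hLc hlip N hN w ws ρ hws g hg hbig η hη0 hη1
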